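/- The set {δ ∈ (0,1) : d(δ) > 0} has Lebesgue measure zero. -/

import Mathlib

/-- `d(x) = inf { 2^n |x - k 2^{-n}| : n ∈ ℕ, k ∈ ℤ }`, the relative distance of `x`
to the dyadic rationals. -/
noncomputable def dd (x : ℝ) : ℝ :=
  sInf {y : ℝ | ∃ (n : ℕ) (k : ℤ), y = 2 ^ n * |x - k / 2 ^ n|}

open MeasureTheory Set

lemma dd_bddBelow (x : ℝ) :
    BddBelow {y : ℝ | ∃ (n : ℕ) (k : ℤ), y = 2 ^ n * |x - k / 2 ^ n|} := by
  refine ⟨0, ?_⟩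
  rintro y ⟨n, k, rfl⟩
  positivity

lemma dd_le (x : ℝ) (n : ℕ) (k : ℤ) : dd x ≤ 2 ^ n * |x - k / 2 ^ n| :=
  csInf_le (dd_bddBelow x) ⟨n, k, rfl⟩

lemma dd_le_norm (x : ℝ) (n : ℕ) :
    dd x ≤ ‖((2 : ℕ) ^ n • (x : UnitAddCircle))‖ := by
  have h2 : (0 : ℝ) < 2 ^ n := by positivity
  have hcoe : ((2 : ℕ) ^ n • (x : UnitAddCircle)) = (((2 : ℝ) ^ n * x : ℝ) : UnitAddCircle) := by
    rw [← AddCircle.coe_nsmul]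
    norm_num [nsmul_eq_mul]
  rw [hcoe, UnitAddCircle.norm_eq]
  set k := round ((2 : ℝ) ^ n * x) with hk
  have : |2 ^ n * x - (k : ℝ)| = 2 ^ n * |x - k / 2 ^ n| := by
    rw [← abs_of_pos h2, ← abs_mul]
    congr 1
    field_simp
    rw [abs_of_pos h2]
  rw [this]
  exact dd_le x n k

/-- The key measure-zero set on the circle. -/
lemma measure_S_zero (c : ℝ) (hc : 0 < c) :
    volume {x : UnitAddCircle | ∀ n : ℕ, c ≤ ‖(2 : ℕ) ^ n • x‖} = 0 := by
  haveI : Fact ((0 : ℝ) < 1) := ⟨zero_lt_one⟩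
  set S : Set UnitAddCircle := {x | ∀ n : ℕ, c ≤ ‖(2 : ℕ) ^ n • x‖} with hS
  have hmeas : MeasurableSet S := by
    have : S = ⋂ n : ℕ, {x : UnitAddCircle | c ≤ ‖(2 : ℕ) ^ n • x‖} := by
      ext x; simp [hS]
    rw [this]
    refine MeasurableSet.iInter fun n => ?_
    have hcont : Continuous fun x : UnitAddCircle => ‖(2 : ℕ) ^ n • x‖ := by
      fun_prop
    exact isClosed_le continuous_const hcont |>.measurableSet
  have herg : Ergodic (fun y : UnitAddCircle => (2 : ℕ) • y) :=
    AddCircle.ergodic_nsmul (one_lt_two)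
  have hsub : S ⊆ (fun y : UnitAddCircle => (2 : ℕ) • y) ⁻¹' S := by
    intro x hx n
    have h := hx (n + 1)
    have : (2 : ℕ) ^ n • ((2 : ℕ) • x) = (2 : ℕ) ^ (n + 1) • x := by
      rw [smul_smul, ← pow_succ]
    simpa [this] using h
  rcases herg.ae_empty_or_univ_of_ae_le_preimage' hmeas.nullMeasurableSet
      hsub.eventuallyLE (measure_ne_top _ _) with h | h
  · exact ae_eq_empty.mp h
  · exfalso
    have hball : Metric.ball (0 : UnitAddCircle) c ⊆ Sᶜ := by
      intro x hx hxS
      have h0 := hxS 0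
      simp only [pow_zero, one_smul] at h0
      rw [Metric.mem_ball, dist_zero_right] at hx
      exact absurd h0 (not_le.mpr hx)
    have hpos : 0 < volume (Metric.ball (0 : UnitAddCircle) c) :=
      Metric.isOpen_ball.measure_pos volume ⟨0, Metric.mem_ball_self hc⟩
    have hc0 : volume Sᶜ = 0 := by
      have := ae_eq_univ.mp h
      simpa using this
    exact absurd (le_antisymm (hc0 ▸ measure_mono hball) zero_le) (ne_of_gt hpos)

/-- **Remark 2.3 (second half).** The set `{δ ∈ (0,1) : d(δ) > 0}` has Lebesgue
measure zero. -/
theorem measure_zero_pos_dd :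
    MeasureTheory.volume {δ ∈ Set.Ioo (0 : ℝ) 1 | 0 < dd δ} = 0 := by
  haveI : Fact ((0 : ℝ) < 1) := ⟨zero_lt_one⟩
  have key : ∀ m : ℕ, volume (Set.Ioc (0 : ℝ) 1 ∩
      ((↑) : ℝ → UnitAddCircle) ⁻¹'
        {x : UnitAddCircle | ∀ n : ℕ, (1 : ℝ) / (m + 1) ≤ ‖(2 : ℕ) ^ n • x‖}) = 0 := by
    intro m
    have hc : (0 : ℝ) < 1 / (m + 1) := by positivity
    set S : Set UnitAddCircle :=
      {x | ∀ n : ℕ, (1 : ℝ) / (m + 1) ≤ ‖(2 : ℕ) ^ n • x‖} with hSdef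
    have hmeas : MeasurableSet S := by
      have : S = ⋂ n : ℕ, {x : UnitAddCircle | (1 : ℝ) / (m + 1) ≤ ‖(2 : ℕ) ^ n • x‖} := by
        ext x; simp [hSdef]
      rw [this]
      refine MeasurableSet.iInter fun n => ?_
      have hcont : Continuous fun x : UnitAddCircle => ‖(2 : ℕ) ^ n • x‖ := by fun_prop
      exact isClosed_le continuous_const hcont |>.measurableSet
    have hmp := AddCircle.measurePreserving_mk (1 : ℝ) 0
    have h1 : volume.restrict (Set.Ioc (0 : ℝ) (0 + 1))
        (((↑) : ℝ → UnitAddCircle) ⁻¹' S) = volume S :=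
      hmp.measure_preimage hmeas.nullMeasurableSet
    have h2 : volume S = 0 := measure_S_zero _ hc
    have h3 : MeasurableSet (((↑) : ℝ → UnitAddCircle) ⁻¹' S) :=
      hmeas.preimage (AddCircle.measurable_mk' (a := (1 : ℝ)))
    rw [Measure.restrict_apply h3, h2, zero_add] at h1
    rw [Set.inter_comm]
    exact h1
  have hsub : {δ ∈ Set.Ioo (0 : ℝ) 1 | 0 < dd δ} ⊆
      ⋃ m : ℕ, (Set.Ioc (0 : ℝ) 1 ∩
        ((↑) : ℝ → UnitAddCircle) ⁻¹'
          {x : UnitAddCircle | ∀ n : ℕ, (1 : ℝ) / (m + 1) ≤ ‖(2 : ℕ) ^ n • x‖}) := by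
    rintro δ ⟨hδ, hdd⟩
    obtain ⟨m, hm⟩ := exists_nat_one_div_lt hdd
    refine Set.mem_iUnion.mpr ⟨m, ⟨Set.Ioo_subset_Ioc_self hδ, ?_⟩⟩
    intro n
    exact le_trans hm.le (dd_le_norm δ n)
  exact measure_mono_null hsub (measure_iUnion_null key)
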